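/- arXiv:1512.05325 — 6 statements merged into one kernel-verified Lean document; each statement's English description precedes it below -/
import Mathlib

section
/- Every almost affine code C ⊆ Σⁿ with s = |Σ| induces a matroid on [n] with rank function ρ_C(X) = log_s(|C_X|); that is, ρ_C satisfies 0 ≤ ρ_C(X) ≤ |X|, monotonicity, and semimodularity. -/
/-!
For `Z ⊆ X` the restriction `C_X → C_Z` is onto. When `X = Z ∪ {i}` each of its fibres has
between `1` and `s` elements, and since `|C_X| / |C_Z|` is a power of `s` it is `1` or `s`;
so either all fibres are singletons or all have exactly `s` elements. Composing such steps,
every fibre of `C_X → C_Z` has exactly `s ^ (ρ X - ρ Z)` elements. Restriction to `X` maps the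
fibre of `C_{X ∪ Y} → C_Y` over `b` injectively into the fibre of `C_X → C_{X ∩ Y}` over the
restriction of `b`, whence `ρ (X ∪ Y) - ρ Y ≤ ρ X - ρ (X ∩ Y)`.
-/

/-- Projection of a code `C ⊆ Σ^n` onto the coordinate set `X ⊆ [n]`. -/
def codeProj {Sig : Type*} [DecidableEq Sig] {n : ℕ}
    (C : Finset (Fin n → Sig)) (X : Finset (Fin n)) : Finset (↥X → Sig) :=
  C.image (fun c => fun i : ↥X => c i.1)

open Finset

section Projection

variable {Sig : Type*} [DecidableEq Sig] {n : ℕ} (C : Finset (Fin n → Sig))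
  {Z W X : Finset (Fin n)}

lemma codeProj_eq_image_restrict₂ (h : Z ⊆ X) :
    codeProj C Z = (codeProj C X).image (restrict₂ (π := fun _ ↦ Sig) h) := by
  simp only [codeProj, image_image]
  rfl

lemma restrict₂_mem_codeProj (h : Z ⊆ X) {f : X → Sig} (hf : f ∈ codeProj C X) :
    restrict₂ (π := fun _ ↦ Sig) h f ∈ codeProj C Z := by
  rw [codeProj_eq_image_restrict₂ C h]
  exact mem_image_of_mem _ hf

lemma card_codeProj_mono (h : Z ⊆ X) : #(codeProj C Z) ≤ #(codeProj C X) := by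
  rw [codeProj_eq_image_restrict₂ C h]
  exact card_image_le

lemma card_codeProj_le_pow [Fintype Sig] (X : Finset (Fin n)) :
    #(codeProj C X) ≤ Fintype.card Sig ^ #X :=
  calc #(codeProj C X) ≤ Fintype.card (X → Sig) := card_le_univ _
    _ = Fintype.card Sig ^ #X := by rw [Fintype.card_fun, Fintype.card_coe]

def projFiber (h : Z ⊆ X) (a : Z → Sig) : Finset (X → Sig) :=
  {f ∈ codeProj C X | restrict₂ (π := fun _ ↦ Sig) h f = a}

lemma card_codeProj_eq_sum_card_projFiber (h : Z ⊆ X) :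
    #(codeProj C X) = ∑ a ∈ codeProj C Z, #(projFiber C h a) :=
  card_eq_sum_card_fiberwise fun _ hf => restrict₂_mem_codeProj C h hf

lemma projFiber_nonempty (h : Z ⊆ X) {a : Z → Sig} (ha : a ∈ codeProj C Z) :
    (projFiber C h a).Nonempty := by
  rw [codeProj_eq_image_restrict₂ C h, mem_image] at ha
  obtain ⟨f, hf, rfl⟩ := ha
  exact ⟨f, mem_filter.mpr ⟨hf, rfl⟩⟩

lemma card_projFiber_insert_le [Fintype Sig] (i : Fin n) (a : Z → Sig) :
    #(projFiber C (subset_insert i Z) a) ≤ Fintype.card Sig := by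
  refine (card_le_card_of_injOn (fun f => f ⟨i, mem_insert_self i Z⟩)
    (fun _ _ => mem_univ _) ?_).trans_eq card_univ
  intro f hf g hg hfg
  funext ⟨j, hj⟩
  rcases mem_insert.mp hj with rfl | hjZ
  · exact hfg
  · exact congrFun ((mem_filter.mp hf).2.trans (mem_filter.mp hg).2.symm) ⟨j, hjZ⟩

lemma card_projFiber_trans (hZW : Z ⊆ W) (hWX : W ⊆ X) (a : Z → Sig) :
    #(projFiber C (hZW.trans hWX) a) = ∑ b ∈ projFiber C hZW a, #(projFiber C hWX b) := by
  refine (card_eq_sum_card_fiberwise (f := restrict₂ (π := fun _ ↦ Sig) hWX)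
    fun f hf => ?_).trans (sum_congr rfl fun b hb => congrArg card ?_)
  · obtain ⟨hfX, rfl⟩ := mem_filter.mp hf
    exact mem_filter.mpr ⟨restrict₂_mem_codeProj C hWX hfX, rfl⟩
  · ext f
    simp only [projFiber, mem_filter] at hb ⊢
    constructor
    · exact fun ⟨⟨hf, _⟩, hfb⟩ => ⟨hf, hfb⟩
    · rintro ⟨hf, rfl⟩
      exact ⟨⟨hf, hb.2⟩, rfl⟩

lemma card_projFiber_union_le {X Y : Finset (Fin n)} (b : Y → Sig) :
    #(projFiber C (subset_union_right : Y ⊆ X ∪ Y) b) ≤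
      #(projFiber C (inter_subset_left : X ∩ Y ⊆ X)
        (restrict₂ (π := fun _ ↦ Sig) inter_subset_right b)) := by
  refine card_le_card_of_injOn (restrict₂ (π := fun _ ↦ Sig) subset_union_left)
    (fun f hf => ?_) ?_
  · obtain ⟨hfU, rfl⟩ := mem_filter.mp hf
    exact mem_filter.mpr ⟨restrict₂_mem_codeProj C _ hfU, rfl⟩
  · intro f hf g hg hfg
    funext ⟨j, hj⟩
    rcases mem_union.mp hj with hjX | hjY
    · exact congrFun hfg ⟨j, hjX⟩
    · exact congrFun ((mem_filter.mp hf).2.trans (mem_filter.mp hg).2.symm) ⟨j, hjY⟩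

end Projection

section AlmostAffine

variable {Sig : Type*} [DecidableEq Sig] {n : ℕ} {C : Finset (Fin n → Sig)}
  {ρ : Finset (Fin n) → ℕ} {s : ℕ}

lemma rank_mono_of_pow_eq_card (hs1 : 1 < s) (haff : ∀ X, s ^ ρ X = #(codeProj C X))
    {Z X : Finset (Fin n)} (h : Z ⊆ X) : ρ Z ≤ ρ X :=
  (Nat.pow_le_pow_iff_right hs1).mp (by rw [haff, haff]; exact card_codeProj_mono C h)

lemma rank_le_card_of_pow_eq_card [Fintype Sig] (hs : Fintype.card Sig = s) (hs1 : 1 < s)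
    (haff : ∀ X, s ^ ρ X = #(codeProj C X)) (X : Finset (Fin n)) : ρ X ≤ #X :=
  (Nat.pow_le_pow_iff_right hs1).mp (by rw [haff, ← hs]; exact card_codeProj_le_pow C X)

lemma card_projFiber_insert_of_pow_eq_card [Fintype Sig] (hs : Fintype.card Sig = s)
    (hs1 : 1 < s) (haff : ∀ X, s ^ ρ X = #(codeProj C X)) {Z : Finset (Fin n)} (i : Fin n)
    {a : Z → Sig} (ha : a ∈ codeProj C Z) :
    #(projFiber C (subset_insert i Z) a) = s ^ (ρ (insert i Z) - ρ Z) := by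
  have hsum := card_codeProj_eq_sum_card_projFiber C (subset_insert i Z)
  have hpos : ∀ b ∈ codeProj C Z, 1 ≤ #(projFiber C (subset_insert i Z) b) :=
    fun b hb => (projFiber_nonempty C _ hb).card_pos
  have hle : ∀ b ∈ codeProj C Z, #(projFiber C (subset_insert i Z) b) ≤ s :=
    fun b _ => hs ▸ card_projFiber_insert_le C i b
  have hmono := rank_mono_of_pow_eq_card hs1 haff (subset_insert i Z)
  have hsucc : ρ (insert i Z) ≤ ρ Z + 1 := by
    rw [← Nat.pow_le_pow_iff_right hs1, haff, pow_succ, haff, hsum, ← smul_eq_mul,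
      ← sum_const]
    exact sum_le_sum hle
  obtain hρ | hρ : ρ (insert i Z) = ρ Z ∨ ρ (insert i Z) = ρ Z + 1 := by omega
  · rw [hρ, Nat.sub_self, pow_zero]
    refine ((sum_eq_sum_iff_of_le hpos).mp ?_ a ha).symm
    rw [← hsum, ← haff, hρ, haff, sum_const, smul_eq_mul, mul_one]
  · rw [hρ, Nat.add_sub_cancel_left, pow_one]
    refine (sum_eq_sum_iff_of_le hle).mp ?_ a ha
    rw [← hsum, ← haff, hρ, pow_succ, haff, sum_const, smul_eq_mul]

lemma card_projFiber_of_pow_eq_card [Fintype Sig] (hs : Fintype.card Sig = s)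
    (hs1 : 1 < s) (haff : ∀ X, s ^ ρ X = #(codeProj C X)) {Z X : Finset (Fin n)}
    (h : Z ⊆ X) {a : Z → Sig} (ha : a ∈ codeProj C Z) :
    #(projFiber C h a) = s ^ (ρ X - ρ Z) := by
  by_cases hXZ : X ⊆ Z
  · obtain rfl := Subset.antisymm h hXZ
    have hsingleton : projFiber C h a = {a} := by
      ext f
      simp only [projFiber, mem_filter, mem_singleton]
      exact ⟨fun hf => hf.2, by rintro rfl; exact ⟨ha, rfl⟩⟩
    rw [hsingleton, card_singleton, Nat.sub_self, pow_zero]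
  · obtain ⟨i, hiX, hiZ⟩ := not_subset.mp hXZ
    have hZW := subset_insert i Z
    have hWX := insert_subset hiX h
    have hfiber :
        ∀ b ∈ projFiber C hZW a, #(projFiber C hWX b) = s ^ (ρ X - ρ (insert i Z)) :=
      fun b hb => card_projFiber_of_pow_eq_card hs hs1 haff hWX (mem_filter.mp hb).1
    rw [card_projFiber_trans C hZW hWX a, sum_congr rfl hfiber, sum_const, smul_eq_mul,
      card_projFiber_insert_of_pow_eq_card hs hs1 haff i ha, ← pow_add]
    have := rank_mono_of_pow_eq_card hs1 haff hZW
    have := rank_mono_of_pow_eq_card hs1 haff hWX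
    congr 1
    omega
termination_by #(X \ Z)
decreasing_by
  rw [sdiff_insert]
  exact card_erase_lt_of_mem (mem_sdiff.mpr ⟨hiX, hiZ⟩)

lemma rank_union_add_rank_inter_le_of_pow_eq_card [Fintype Sig] (hs : Fintype.card Sig = s)
    (hs1 : 1 < s) (haff : ∀ X, s ^ ρ X = #(codeProj C X)) (X Y : Finset (Fin n)) :
    ρ (X ∪ Y) + ρ (X ∩ Y) ≤ ρ X + ρ Y := by
  obtain ⟨b, hb⟩ : (codeProj C Y).Nonempty := by
    rw [← card_pos, ← haff]
    exact pow_pos (by omega) _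
  have hfibers : s ^ (ρ (X ∪ Y) - ρ Y) ≤ s ^ (ρ X - ρ (X ∩ Y)) := by
    rw [← card_projFiber_of_pow_eq_card hs hs1 haff subset_union_right hb,
      ← card_projFiber_of_pow_eq_card hs hs1 haff inter_subset_left
        (restrict₂_mem_codeProj C inter_subset_right hb)]
    exact card_projFiber_union_le C b
  have := (Nat.pow_le_pow_iff_right hs1).mp hfibers
  have := rank_mono_of_pow_eq_card hs1 haff (subset_union_right : Y ⊆ X ∪ Y)
  have := rank_mono_of_pow_eq_card hs1 haff (inter_subset_left : X ∩ Y ⊆ X)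
  omega

end AlmostAffine

/-- Every almost affine code `C ⊆ Σ^n` with `s = |Σ|` induces a
matroid on `[n]` with rank function `ρ_C(X) = log_s |C_X|`; that is, `ρ_C`
satisfies `0 ≤ ρ_C(X) ≤ |X|`, monotonicity and semimodularity.
(Almost affinity is encoded by the existence of the integer-valued `ρC` with
`s ^ ρC X = |C_X|` for all `X`.) -/
theorem almostAffine_induces_matroid {Sig : Type*} [Fintype Sig] [DecidableEq Sig]
    (n s : ℕ) (hs : Fintype.card Sig = s) (hs2 : 2 ≤ s)
    (C : Finset (Fin n → Sig))
    (ρC : Finset (Fin n) → ℕ)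
    (haff : ∀ X : Finset (Fin n), s ^ ρC X = (codeProj C X).card) :
    (∀ X : Finset (Fin n), ρC X ≤ X.card) ∧
    (∀ X Y : Finset (Fin n), X ⊆ Y → ρC X ≤ ρC Y) ∧
    (∀ X Y : Finset (Fin n), ρC (X ∪ Y) + ρC (X ∩ Y) ≤ ρC X + ρC Y) :=
  ⟨rank_le_card_of_pow_eq_card hs hs2 haff,
    fun _ _ => rank_mono_of_pow_eq_card hs2 haff,
    rank_union_add_rank_inter_le_of_pow_eq_card hs hs2 haff⟩
end

section
/- If M = (E, ρ) is a matroid with E a cyclic flat (1_Z = E), and X ⊆ E satisfies ρ(X) < ρ(E), then η(X) ≤ max{η(Z) : Z a coatom of the lattice of cyclic flats of M}. -/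
/-!
Among the sets `Y ⊆ E` with `ρ Y < ρ E` and `η X ≤ η Y`, one maximising `|Y| - 2 ρ(Y)` is a
cyclic flat: adding an element of its closure raises `|Y|` without raising the rank, and deleting
a coloop lowers the rank by one while lowering `|Y|` by one, keeping `η` in both cases. Any cyclic
flat `Z ≠ E` lies below a coatom, and nullity is monotone under inclusion, so that coatom has
nullity at least `η X`.
-/

/-- A set is cyclic if removing any single element does not change its rank
(equivalently, it is a union of circuits). -/
def IsCyclicSet {α : Type*} [DecidableEq α] (ρ : Finset α → ℕ) (X : Finset α) : Prop :=
  ∀ x ∈ X, ρ (X.erase x) = ρ X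

/-- A flat of the matroid `(E, ρ)`: a subset equal to its closure. -/
def IsFlat {α : Type*} [DecidableEq α] (E : Finset α) (ρ : Finset α → ℕ)
    (X : Finset α) : Prop :=
  X ⊆ E ∧ ∀ x ∈ E, ρ (insert x X) = ρ X → x ∈ X

/-- A cyclic flat: a flat that is also a cyclic set. -/
def IsCyclicFlat {α : Type*} [DecidableEq α] (E : Finset α) (ρ : Finset α → ℕ)
    (X : Finset α) : Prop :=
  IsFlat E ρ X ∧ IsCyclicSet ρ X

/-- A coatom of the lattice of cyclic flats (whose greatest element is `E`):
a maximal cyclic flat properly contained in `E`. -/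
def IsCoatomCF {α : Type*} [DecidableEq α] (E : Finset α) (ρ : Finset α → ℕ)
    (Z : Finset α) : Prop :=
  IsCyclicFlat E ρ Z ∧ Z ≠ E ∧ ∀ W, IsCyclicFlat E ρ W → Z ⊂ W → W = E

section

variable {α : Type*} [DecidableEq α] {E : Finset α} {ρ : Finset α → ℕ}

theorem IsCyclicFlat.exists_isCoatomCF_superset {Z : Finset α} (hZ : IsCyclicFlat E ρ Z) (hZE : Z ≠ E) :
    ∃ W, Z ⊆ W ∧ IsCoatomCF E ρ W := by
  classical
  set S := E.powerset.filter fun W => IsCyclicFlat E ρ W ∧ W ≠ E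
  have hZS : Z ∈ S := Finset.mem_filter.2 ⟨Finset.mem_powerset.2 hZ.1.1, hZ, hZE⟩
  obtain ⟨W, hZW, hWS, hWmax⟩ := S.exists_le_maximal hZS
  obtain ⟨-, hW, hWE⟩ := Finset.mem_filter.1 hWS
  refine ⟨W, hZW, hW, hWE, fun V hV hWV => ?_⟩
  by_contra hVE
  exact hWV.not_subset (hWmax (Finset.mem_filter.2 ⟨Finset.mem_powerset.2 hV.1.1, hV, hVE⟩)
    hWV.subset)

structure IsRankFn (E : Finset α) (ρ : Finset α → ℕ) : Prop where
  le_card : ∀ X, X ⊆ E → ρ X ≤ X.card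
  mono : ∀ X Y, X ⊆ Y → Y ⊆ E → ρ X ≤ ρ Y
  submod : ∀ X Y, X ⊆ E → Y ⊆ E → ρ (X ∪ Y) + ρ (X ∩ Y) ≤ ρ X + ρ Y

namespace IsRankFn

theorem rank_union_le_add_card (hρ : IsRankFn E ρ) {A B : Finset α} (hA : A ⊆ E) (hB : B ⊆ E) :
    ρ (A ∪ B) ≤ ρ A + B.card := by
  have := hρ.submod A B hA hB
  have := hρ.le_card B hB
  omega

theorem rank_insert_le_add_one (hρ : IsRankFn E ρ) {A : Finset α} {x : α} (hA : A ⊆ E)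
    (hx : x ∈ E) : ρ (insert x A) ≤ ρ A + 1 := by
  rw [Finset.insert_eq, Finset.union_comm]
  exact hρ.rank_union_le_add_card hA (Finset.singleton_subset_iff.2 hx)

theorem card_sub_rank_mono (hρ : IsRankFn E ρ) {A B : Finset α} (hAB : A ⊆ B) (hB : B ⊆ E) :
    A.card - ρ A ≤ B.card - ρ B := by
  have hdiff : B \ A ⊆ E := Finset.sdiff_subset.trans hB
  have hunion := hρ.rank_union_le_add_card (hAB.trans hB) hdiff
  rw [Finset.union_sdiff_of_subset hAB] at hunion
  have := Finset.card_sdiff_add_card_eq_card hAB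
  have := hρ.le_card A (hAB.trans hB)
  omega

theorem exists_isCyclicFlat_rank_lt (hρ : IsRankFn E ρ) {X : Finset α} (hX : X ⊆ E)
    (hlt : ρ X < ρ E) :
    ∃ Z, IsCyclicFlat E ρ Z ∧ ρ Z < ρ E ∧ X.card - ρ X ≤ Z.card - ρ Z := by
  set S := E.powerset.filter fun Y => ρ Y < ρ E ∧ X.card - ρ X ≤ Y.card - ρ Y
  have mem_S {Y} (hY : Y ⊆ E) (hYr : ρ Y < ρ E) (hYη : X.card - ρ X ≤ Y.card - ρ Y) : Y ∈ S :=
    Finset.mem_filter.2 ⟨Finset.mem_powerset.2 hY, hYr, hYη⟩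
  obtain ⟨Y, hYS, hYmax⟩ := S.exists_max_image (fun Y => (Y.card : ℤ) - 2 * ρ Y)
    ⟨X, mem_S hX hlt le_rfl⟩
  obtain ⟨hYE, hYr, hYη⟩ := Finset.mem_filter.1 hYS
  rw [Finset.mem_powerset] at hYE
  refine ⟨Y, ⟨⟨hYE, fun x hx hspan => ?_⟩, fun x hx => ?_⟩, hYr, hYη⟩
  · by_contra hxY
    have hins : insert x Y ⊆ E := Finset.insert_subset hx hYE
    have := hYmax _ <| mem_S hins (hspan ▸ hYr)
      (hYη.trans (hρ.card_sub_rank_mono (Finset.subset_insert x Y) hins))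
    rw [hspan, Finset.card_insert_of_notMem hxY] at this
    omega
  · by_contra hcoloop
    have hera : Y.erase x ⊆ E := (Finset.erase_subset x Y).trans hYE
    have hle := hρ.mono _ _ (Finset.erase_subset x Y) hYE
    have hge := hρ.rank_insert_le_add_one hera (hYE hx)
    rw [Finset.insert_erase hx] at hge
    have hcard := Finset.card_erase_add_one hx
    have := hρ.le_card Y hYE
    have := hYmax _ <| mem_S hera (by omega) (by omega)
    omega

end IsRankFn

end

theorem nullity_le_max_coatom_nullity_general {α : Type*} [DecidableEq α] (E : Finset α)
    (ρ : Finset α → ℕ)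
    (hcard : ∀ X, X ⊆ E → ρ X ≤ X.card)
    (hmono : ∀ X Y, X ⊆ Y → Y ⊆ E → ρ X ≤ ρ Y)
    (hsubmod : ∀ X Y, X ⊆ E → Y ⊆ E → ρ (X ∪ Y) + ρ (X ∩ Y) ≤ ρ X + ρ Y)
    (X : Finset α) (hX : X ⊆ E) (hlt : ρ X < ρ E) :
    ∃ Z, IsCoatomCF E ρ Z ∧ X.card - ρ X ≤ Z.card - ρ Z := by
  have hρ : IsRankFn E ρ := ⟨hcard, hmono, hsubmod⟩
  obtain ⟨Z₀, hZ₀, hZ₀r, hXZ₀⟩ := hρ.exists_isCyclicFlat_rank_lt hX hlt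
  obtain ⟨Z, hZ₀Z, hZ⟩ := hZ₀.exists_isCoatomCF_superset (by rintro rfl; omega)
  exact ⟨Z, hZ, hXZ₀.trans (hρ.card_sub_rank_mono hZ₀Z hZ.1.1.1)⟩

/-- If `M = (E, ρ)` is a matroid with `E` a cyclic flat
(`1_Z = E`), and `X ⊆ E` satisfies `ρ(X) < ρ(E)`, then
`η(X) ≤ max{η(Z) : Z a coatom of the lattice of cyclic flats}`
(here stated as: some coatom `Z` has `η(X) ≤ η(Z)`, with `η(Y) = |Y| − ρ(Y)`). -/
theorem nullity_le_max_coatom_nullity {α : Type*} [DecidableEq α] (E : Finset α)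
    (ρ : Finset α → ℕ)
    (hcard : ∀ X, X ⊆ E → ρ X ≤ X.card)
    (hmono : ∀ X Y, X ⊆ Y → Y ⊆ E → ρ X ≤ ρ Y)
    (hsubmod : ∀ X Y, X ⊆ E → Y ⊆ E → ρ (X ∪ Y) + ρ (X ∩ Y) ≤ ρ X + ρ Y)
    (hE : IsCyclicFlat E ρ E)
    (X : Finset α) (hX : X ⊆ E) (hlt : ρ X < ρ E) :
    ∃ Z, IsCoatomCF E ρ Z ∧ X.card - ρ X ≤ Z.card - ρ Z :=
  nullity_le_max_coatom_nullity_general E ρ hcard hmono hsubmod X hX hlt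
end

section
/- Let M = (E, ρ) be a matroid with 0 < ρ(E) and with E a cyclic flat. Then the minimum size of a circuit of the dual matroid M* equals n − k + 1 − max{η(Z) : Z a coatom of the lattice of cyclic flats}, where n = |E| and k = ρ(E). -/
/-!
Complements of cocircuits are exactly the hyperplanes, and `|H| = (k - 1) + η(H)` for a hyperplane
`H`, so the smallest cocircuit has size `n - k + 1 - max η(H)`, the maximum over hyperplanes.
Deleting the coloops of `M|H` leaves a cyclic flat of the same nullity, which lies below a coatom
of the lattice of cyclic flats; conversely every coatom lies in a hyperplane. Since `η` is
monotone, hyperplanes and coatoms have the same maximal nullity.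
-/

theorem Finset.exists_le_maximal_of_subset {α : Type*} {P : Finset α → Prop} {E X : Finset α}
    (hX : X ⊆ E) (hP : P X) : ∃ Y, X ⊆ Y ∧ Maximal (fun Y => Y ⊆ E ∧ P Y) Y :=
  ((E.powerset : Set (Finset α)).toFinite.subset fun _ hY =>
    Finset.mem_coe.mpr (Finset.mem_powerset.mpr hY.1)).exists_le_maximal ⟨hX, hP⟩

open Finset

section RankFunction

variable {α : Type*}

def nullity (ρ : Finset α → ℕ) (X : Finset α) : ℕ := X.card - ρ X

variable [DecidableEq α]

structure IsRankFunction (E : Finset α) (ρ : Finset α → ℕ) : Prop where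
  le_card : ∀ X, X ⊆ E → ρ X ≤ X.card
  mono : ∀ X Y, X ⊆ Y → Y ⊆ E → ρ X ≤ ρ Y
  submod : ∀ X Y, X ⊆ E → Y ⊆ E → ρ (X ∪ Y) + ρ (X ∩ Y) ≤ ρ X + ρ Y

def IsHyperplane (E : Finset α) (ρ : Finset α → ℕ) (H : Finset α) : Prop :=
  IsFlat E ρ H ∧ ρ H + 1 = ρ E

def IsCocircuit (E : Finset α) (ρ : Finset α → ℕ) (C : Finset α) : Prop :=
  C ⊆ E ∧ ρ (E \ C) < ρ E ∧ ∀ C', C' ⊂ C → ρ (E \ C') = ρ E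

def cyclicPart (ρ : Finset α → ℕ) (H : Finset α) : Finset α :=
  H.filter fun x => ρ (H.erase x) = ρ H

def coloops (ρ : Finset α → ℕ) (H : Finset α) : Finset α :=
  H.filter fun x => ρ (H.erase x) ≠ ρ H

theorem cyclicPart_subset (ρ : Finset α → ℕ) (H : Finset α) : cyclicPart ρ H ⊆ H :=
  filter_subset _ H

theorem coloops_subset (ρ : Finset α → ℕ) (H : Finset α) : coloops ρ H ⊆ H :=
  filter_subset _ H

theorem cyclicPart_union_coloops (ρ : Finset α → ℕ) (H : Finset α) :
    cyclicPart ρ H ∪ coloops ρ H = H :=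
  filter_union_filter_not_eq _ _

theorem card_cyclicPart_add_card_coloops (ρ : Finset α → ℕ) (H : Finset α) :
    (cyclicPart ρ H).card + (coloops ρ H).card = H.card :=
  card_filter_add_card_filter_not _

namespace IsRankFunction

variable {E : Finset α} {ρ : Finset α → ℕ}

theorem rank_empty (hρ : IsRankFunction E ρ) : ρ ∅ = 0 :=
  Nat.le_zero.mp (hρ.le_card ∅ (empty_subset E))

theorem rank_insert_le (hρ : IsRankFunction E ρ) {X : Finset α} {x : α} (hX : X ⊆ E)
    (hx : x ∈ E) : ρ (insert x X) ≤ ρ X + 1 := by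
  have hsub := hρ.submod {x} X (singleton_subset_iff.mpr hx) hX
  have hx1 : ρ {x} ≤ 1 := hρ.le_card {x} (singleton_subset_iff.mpr hx)
  rw [← insert_eq] at hsub
  omega

theorem rank_union_le_add_card (hρ : IsRankFunction E ρ) {X S : Finset α} (hX : X ⊆ E)
    (hS : S ⊆ E) : ρ (X ∪ S) ≤ ρ X + S.card := by
  induction S using Finset.induction_on with
  | empty => simp
  | insert a s ha ih =>
    obtain ⟨haE, hsE⟩ := insert_subset_iff.mp hS
    have := hρ.rank_insert_le (union_subset hX hsE) haE
    have := ih hsE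
    rw [union_insert, card_insert_of_notMem ha]
    omega

theorem rank_union_eq_of_forall_rank_insert_eq (hρ : IsRankFunction E ρ) {X Y : Finset α}
    (hX : X ⊆ E) (hY : Y ⊆ E) (h : ∀ y ∈ Y, ρ (insert y X) = ρ X) :
    ρ (X ∪ Y) = ρ X := by
  induction Y using Finset.induction_on with
  | empty => simp
  | insert a s _ ih =>
    obtain ⟨haE, hsE⟩ := insert_subset_iff.mp hY
    have hs : ρ (X ∪ s) = ρ X := ih hsE fun y hy => h y (mem_insert_of_mem hy)
    have hsub := hρ.submod (X ∪ s) (insert a X) (union_subset hX hsE) (insert_subset haE hX)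
    have hunion : X ∪ s ∪ insert a X = X ∪ insert a s := by grind
    have hinter : ρ X ≤ ρ ((X ∪ s) ∩ insert a X) :=
      hρ.mono _ _ (subset_inter subset_union_left (subset_insert a X))
        (inter_subset_left.trans (union_subset hX hsE))
    have hle : ρ X ≤ ρ (X ∪ insert a s) := hρ.mono _ _ subset_union_left (union_subset hX hY)
    rw [hunion, h a (mem_insert_self a s), hs] at hsub
    omega

theorem exists_rank_insert_eq_add_one (hρ : IsRankFunction E ρ) {X : Finset α} (hX : X ⊆ E)
    (hlt : ρ X < ρ E) : ∃ y ∈ E, ρ (insert y X) = ρ X + 1 := by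
  by_contra! hcon
  have hspan : ∀ y ∈ E, ρ (insert y X) = ρ X := fun y hy => by
    have := hρ.rank_insert_le hX hy
    have := hρ.mono _ _ (subset_insert y X) (insert_subset hy hX)
    have := hcon y hy
    omega
  have := hρ.rank_union_eq_of_forall_rank_insert_eq hX subset_rfl hspan
  rw [union_eq_right.mpr hX] at this
  omega

theorem rank_add_nullity (hρ : IsRankFunction E ρ) {X : Finset α} (hX : X ⊆ E) :
    ρ X + nullity ρ X = X.card := by
  have := hρ.le_card X hX
  unfold nullity
  omega

theorem nullity_mono (hρ : IsRankFunction E ρ) {X Y : Finset α} (hXY : X ⊆ Y) (hY : Y ⊆ E) :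
    nullity ρ X ≤ nullity ρ Y := by
  have h := hρ.rank_union_le_add_card (hXY.trans hY) (sdiff_subset.trans hY) (S := Y \ X)
  rw [union_sdiff_of_subset hXY, card_sdiff_of_subset hXY] at h
  have := card_le_card hXY
  have := hρ.rank_add_nullity (hXY.trans hY)
  have := hρ.rank_add_nullity hY
  omega

theorem rank_lt_of_isFlat (hρ : IsRankFunction E ρ) {Z : Finset α} (hZ : IsFlat E ρ Z)
    (hne : Z ≠ E) : ρ Z < ρ E := by
  refine lt_of_le_of_ne (hρ.mono _ _ hZ.1 subset_rfl) fun heq => hne ?_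
  refine hZ.1.antisymm fun x hx => hZ.2 x hx ?_
  have := hρ.mono _ _ (insert_subset hx hZ.1) subset_rfl
  have := hρ.mono _ _ (subset_insert x Z) (insert_subset hx hZ.1)
  omega

theorem exists_isHyperplane_superset (hρ : IsRankFunction E ρ) {Z : Finset α} (hZ : Z ⊆ E)
    (hlt : ρ Z < ρ E) : ∃ H, IsHyperplane E ρ H ∧ Z ⊆ H := by
  obtain ⟨H, hZH, ⟨hHE, hHlt⟩, hmax⟩ :=
    exists_le_maximal_of_subset (P := (ρ · < ρ E)) hZ hlt
  have hmem_of_lt : ∀ x ∈ E, ρ (insert x H) < ρ E → x ∈ H := fun x hx h =>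
    hmax ⟨insert_subset hx hHE, h⟩ (subset_insert x H) (mem_insert_self x H)
  refine ⟨H, ⟨⟨hHE, fun x hx h => hmem_of_lt x hx (h ▸ hHlt)⟩, ?_⟩, hZH⟩
  obtain ⟨y, hyE, hy⟩ := hρ.exists_rank_insert_eq_add_one hHE hHlt
  by_contra hne
  have hyH : y ∈ H := hmem_of_lt y hyE (by omega)
  rw [insert_eq_of_mem hyH] at hy
  omega

theorem rank_sdiff_add_card_le (hρ : IsRankFunction E ρ) {H S : Finset α} (hH : H ⊆ E)
    (hS : S ⊆ coloops ρ H) : ρ (H \ S) + S.card ≤ ρ H := by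
  induction S using Finset.induction_on with
  | empty => simp
  | insert a s ha ih =>
    obtain ⟨haC, hsC⟩ := insert_subset_iff.mp hS
    obtain ⟨haH, hcoloop⟩ := mem_filter.mp haC
    have herase : ρ (H.erase a) ≤ ρ H := hρ.mono _ _ (erase_subset a H) hH
    have hsub :=
      hρ.submod (H.erase a) (H \ s) ((erase_subset a H).trans hH) (sdiff_subset.trans hH)
    have hunion : H.erase a ∪ H \ s = H := by grind
    have hinter : H.erase a ∩ (H \ s) = H \ insert a s := by grind
    rw [hunion, hinter] at hsub
    have := ih hsC
    rw [card_insert_of_notMem ha]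
    omega

theorem rank_cyclicPart_add_card_coloops (hρ : IsRankFunction E ρ) {H : Finset α}
    (hH : H ⊆ E) :
    ρ (cyclicPart ρ H) + (coloops ρ H).card = ρ H := by
  have hle := hρ.rank_sdiff_add_card_le hH subset_rfl
  have hge := hρ.rank_union_le_add_card ((cyclicPart_subset ρ H).trans hH)
    ((coloops_subset ρ H).trans hH)
  have hsdiff : H \ coloops ρ H = cyclicPart ρ H := by
    ext x
    simp only [cyclicPart, coloops, mem_sdiff, mem_filter]
    tauto
  rw [cyclicPart_union_coloops] at hge
  rw [hsdiff] at hle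
  omega

theorem nullity_cyclicPart (hρ : IsRankFunction E ρ) {H : Finset α} (hH : H ⊆ E) :
    nullity ρ (cyclicPart ρ H) = nullity ρ H := by
  have := hρ.rank_cyclicPart_add_card_coloops hH
  have := card_cyclicPart_add_card_coloops ρ H
  unfold nullity
  omega

theorem isCyclicSet_cyclicPart (hρ : IsRankFunction E ρ) {H : Finset α} (hH : H ⊆ E) :
    IsCyclicSet ρ (cyclicPart ρ H) := by
  intro x hx
  have hxH : ρ (H.erase x) = ρ H := (mem_filter.mp hx).2
  have hxC : x ∉ coloops ρ H := fun h => (mem_filter.mp h).2 hxH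
  have hunion : (cyclicPart ρ H).erase x ∪ coloops ρ H = H.erase x := by
    conv_rhs => rw [← cyclicPart_union_coloops ρ H]
    grind
  have hge := hρ.rank_union_le_add_card
    ((erase_subset x _).trans ((cyclicPart_subset ρ H).trans hH)) ((coloops_subset ρ H).trans hH)
  have hle := hρ.mono _ _ (erase_subset x _) ((cyclicPart_subset ρ H).trans hH)
  have := hρ.rank_cyclicPart_add_card_coloops hH
  rw [hunion] at hge
  omega

theorem isFlat_cyclicPart (hρ : IsRankFunction E ρ) {H : Finset α} (hH : IsFlat E ρ H) :
    IsFlat E ρ (cyclicPart ρ H) := by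
  refine ⟨(cyclicPart_subset ρ H).trans hH.1, fun x hx hrank => ?_⟩
  have hunion : insert x (cyclicPart ρ H) ∪ (coloops ρ H).erase x = insert x H := by
    conv_rhs => rw [← cyclicPart_union_coloops ρ H]
    grind
  have hge := hρ.rank_union_le_add_card (insert_subset hx ((cyclicPart_subset ρ H).trans hH.1))
    ((erase_subset x _).trans ((coloops_subset ρ H).trans hH.1))
  have hle := hρ.mono _ _ (subset_insert x H) (insert_subset hx hH.1)
  have := hρ.rank_cyclicPart_add_card_coloops hH.1
  rw [hunion, hrank] at hge
  -- were `x` a coloop of `M|H`, the other coloops and `cyclicPart ρ H` would already span `H`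
  by_cases hxC : x ∈ coloops ρ H
  · have := card_erase_add_one hxC
    omega
  · rw [erase_eq_of_notMem hxC] at hge
    have hxH : x ∈ H := hH.2 x hx (by omega)
    simpa [cyclicPart, coloops, hxH] using hxC

theorem exists_isCoatomCF_nullity_ge (hρ : IsRankFunction E ρ) {H : Finset α}
    (hH : IsFlat E ρ H) (hlt : ρ H < ρ E) :
    ∃ Z, IsCoatomCF E ρ Z ∧ nullity ρ H ≤ nullity ρ Z := by
  have hcore : IsCyclicFlat E ρ (cyclicPart ρ H) :=
    ⟨hρ.isFlat_cyclicPart hH, hρ.isCyclicSet_cyclicPart hH.1⟩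
  have hcore_ne : cyclicPart ρ H ≠ E := fun h => by
    have := hρ.mono _ _ (cyclicPart_subset ρ H) hH.1
    rw [h] at this
    omega
  obtain ⟨Z, hcoreZ, ⟨hZE, hZ, hZne⟩, hmax⟩ :=
    exists_le_maximal_of_subset (P := fun Z => IsCyclicFlat E ρ Z ∧ Z ≠ E) hcore.1.1
      ⟨hcore, hcore_ne⟩
  refine ⟨Z, ⟨hZ, hZne, fun W hW hZW => ?_⟩, ?_⟩
  · by_contra hWne
    exact hZW.not_subset (hmax ⟨hW.1.1, hW, hWne⟩ hZW.subset)
  · rw [← hρ.nullity_cyclicPart hH.1]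
    exact hρ.nullity_mono hcoreZ hZE

theorem isCocircuit_sdiff (hρ : IsRankFunction E ρ) {H : Finset α}
    (hH : IsHyperplane E ρ H) :
    IsCocircuit E ρ (E \ H) := by
  obtain ⟨⟨hHE, hflat⟩, hrank⟩ := hH
  refine ⟨sdiff_subset, by rw [Finset.sdiff_sdiff_eq_self hHE]; omega, fun C' hC' => ?_⟩
  obtain ⟨x, hxC, hxC'⟩ := exists_of_ssubset hC'
  obtain ⟨hxE, hxH⟩ := mem_sdiff.mp hxC
  have hsub : insert x H ⊆ E \ C' :=
    insert_subset (mem_sdiff.mpr ⟨hxE, hxC'⟩) fun y hy =>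
      mem_sdiff.mpr ⟨hHE hy, fun hyC' => (mem_sdiff.mp (hC'.subset hyC')).2 hy⟩
  have := hρ.rank_insert_le hHE hxE
  have := hρ.mono _ _ (subset_insert x H) (insert_subset hxE hHE)
  have := hρ.mono _ _ hsub sdiff_subset
  have := hρ.mono _ _ (sdiff_subset (s := E) (t := C')) subset_rfl
  have : ρ (insert x H) ≠ ρ H := fun h => hxH (hflat x hxE h)
  omega

theorem isHyperplane_sdiff (hρ : IsRankFunction E ρ) {C : Finset α}
    (hC : IsCocircuit E ρ C) :
    IsHyperplane E ρ (E \ C) := by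
  obtain ⟨hCE, hlt, hmin⟩ := hC
  have hinsert : ∀ x ∈ C, ρ (insert x (E \ C)) = ρ E := fun x hx => by
    rw [← sdiff_erase (hCE hx)]
    exact hmin _ (erase_ssubset hx)
  obtain ⟨x, hx⟩ : C.Nonempty := nonempty_iff_ne_empty.mpr fun h => by simp [h] at hlt
  refine ⟨⟨sdiff_subset, fun y hy hrank => ?_⟩, ?_⟩
  · by_contra hyC
    have := hinsert y (by simpa [hy] using hyC)
    omega
  · have := hinsert x hx
    have := hρ.rank_insert_le (sdiff_subset : E \ C ⊆ E) (hCE hx)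
    omega

theorem card_sdiff_add_nullity_add_rank (hρ : IsRankFunction E ρ) {H : Finset α}
    (hH : IsHyperplane E ρ H) :
    (E \ H).card + nullity ρ H + ρ E = E.card + 1 := by
  have := card_sdiff_add_card_eq_card hH.1.1
  have := hρ.rank_add_nullity hH.1.1
  have := hH.2
  omega

theorem isLeast_card_isCocircuit (hρ : IsRankFunction E ρ) {H : Finset α}
    (hH : IsHyperplane E ρ H)
    (hmax : ∀ H', IsHyperplane E ρ H' → nullity ρ H' ≤ nullity ρ H) :
    IsLeast {c | ∃ C, IsCocircuit E ρ C ∧ C.card = c} (E \ H).card := by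
  refine ⟨⟨E \ H, hρ.isCocircuit_sdiff hH, rfl⟩, ?_⟩
  rintro _ ⟨C, hC, rfl⟩
  have hCH := hρ.card_sdiff_add_nullity_add_rank (hρ.isHyperplane_sdiff hC)
  rw [Finset.sdiff_sdiff_eq_self hC.1] at hCH
  have := hmax _ (hρ.isHyperplane_sdiff hC)
  have := hρ.card_sdiff_add_nullity_add_rank hH
  omega

end IsRankFunction

end RankFunction

theorem min_dual_circuit_eq_general {α : Type*} [DecidableEq α] (E : Finset α)
    (ρ : Finset α → ℕ)
    (hcard : ∀ X, X ⊆ E → ρ X ≤ X.card)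
    (hmono : ∀ X Y, X ⊆ Y → Y ⊆ E → ρ X ≤ ρ Y)
    (hsubmod : ∀ X Y, X ⊆ E → Y ⊆ E → ρ (X ∪ Y) + ρ (X ∩ Y) ≤ ρ X + ρ Y)
    (hk0 : 0 < ρ E)
    (d : ℕ)
    (hd : d = sInf {c : ℕ | ∃ C, C ⊆ E ∧ ρ (E \ C) < ρ E ∧
        (∀ C', C' ⊂ C → ρ (E \ C') = ρ E) ∧ C.card = c})
    (mx : ℕ)
    (hmx : mx = sSup {v : ℕ | ∃ Z, IsCoatomCF E ρ Z ∧ v = Z.card - ρ Z}) :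
    (d : ℤ) = (E.card : ℤ) - (ρ E : ℤ) + 1 - (mx : ℤ) := by
  have hρ : IsRankFunction E ρ := ⟨hcard, hmono, hsubmod⟩
  have hbdd : BddAbove {v : ℕ | ∃ Z, IsCoatomCF E ρ Z ∧ v = Z.card - ρ Z} :=
    ⟨E.card, by rintro _ ⟨Z, hZ, rfl⟩; exact (Nat.sub_le _ _).trans (card_le_card hZ.1.1.1)⟩
  have hbound : ∀ H, IsHyperplane E ρ H → nullity ρ H ≤ mx := fun H hH => by
    obtain ⟨Z, hZ, hHZ⟩ := hρ.exists_isCoatomCF_nullity_ge hH.1 (Nat.lt_of_succ_le hH.2.le)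
    rw [hmx]
    exact hHZ.trans (le_csSup hbdd ⟨Z, hZ, rfl⟩)
  obtain ⟨H₀, hH₀, -⟩ :=
    hρ.exists_isHyperplane_superset (empty_subset E) (hρ.rank_empty ▸ hk0)
  obtain ⟨Z₀, hZ₀, -⟩ :=
    hρ.exists_isCoatomCF_nullity_ge hH₀.1 (Nat.lt_of_succ_le hH₀.2.le)
  obtain ⟨Z, hZ, hZmx⟩ : mx ∈ {v : ℕ | ∃ Z, IsCoatomCF E ρ Z ∧ v = Z.card - ρ Z} :=
    hmx ▸ Nat.sSup_mem ⟨_, Z₀, hZ₀, rfl⟩ hbdd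
  obtain ⟨H, hH, hZH⟩ :=
    hρ.exists_isHyperplane_superset hZ.1.1.1 (hρ.rank_lt_of_isFlat hZ.1.1 hZ.2.1)
  have hHmx : nullity ρ H = mx := le_antisymm (hbound H hH) (hZmx ▸ hρ.nullity_mono hZH hH.1.1)
  have hdH : d = (E \ H).card := by
    rw [hd, ← (hρ.isLeast_card_isCocircuit hH (hHmx ▸ hbound)).csInf_eq]
    simp only [IsCocircuit, and_assoc]
  have := hρ.card_sdiff_add_nullity_add_rank hH
  omega

/-- Let `M = (E, ρ)` be a matroid with `0 < ρ(E)` and `E` a cyclic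
flat. Then the minimum size of a circuit of the dual matroid `M*` equals
`n − k + 1 − max{η(Z) : Z a coatom of the lattice of cyclic flats}`,
with `n = |E|`, `k = ρ(E)`, `η(Z) = |Z| − ρ(Z)`. -/
theorem min_dual_circuit_eq {α : Type*} [DecidableEq α] (E : Finset α)
    (ρ : Finset α → ℕ)
    (hcard : ∀ X, X ⊆ E → ρ X ≤ X.card)
    (hmono : ∀ X Y, X ⊆ Y → Y ⊆ E → ρ X ≤ ρ Y)
    (hsubmod : ∀ X Y, X ⊆ E → Y ⊆ E → ρ (X ∪ Y) + ρ (X ∩ Y) ≤ ρ X + ρ Y)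
    (hk0 : 0 < ρ E) (hE : IsCyclicFlat E ρ E)
    (d : ℕ)
    (hd : d = sInf {c : ℕ | ∃ C, C ⊆ E ∧ ρ (E \ C) < ρ E ∧
        (∀ C', C' ⊂ C → ρ (E \ C') = ρ E) ∧ C.card = c})
    (mx : ℕ)
    (hmx : mx = sSup {v : ℕ | ∃ Z, IsCoatomCF E ρ Z ∧ v = Z.card - ρ Z}) :
    (d : ℤ) = (E.card : ℤ) - (ρ E : ℤ) + 1 - (mx : ℤ) :=
  min_dual_circuit_eq_general E ρ hcard hmono hsubmod hk0 d hd mx hmx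
end

section
/- Let m ≥ 1, and let nonnegative integers η₁,…,η_m have sum s, distributed as evenly as possible: η_i = ⌈s/m⌉ for i ≤ s − ⌊s/m⌋m and η_i = ⌊s/m⌋ otherwise. Then for any t with 1 ≤ t ≤ m, the maximum of Σ_{i∈I} η_i over I ⊆ [m] with |I| = t equals t·⌊s/m⌋ + min{t, s − ⌊s/m⌋·m}, and this is the minimum possible value of this maximum over all nonnegative integer sequences summing to s. -/
/-!
The even distribution has `min t r` parts equal to `q + 1` among any `t` parts, where
`s = m q + r`, and exactly that many among the first `t`. For an arbitrary distribution, either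
some `t` parts all exceed `q`, giving a sum of at least `t (q + 1)`, or some `t` parts contain all
parts exceeding `q`; then the other `m - t` parts sum to at most `(m - t) q`, so these `t` parts
sum to at least `t q + r`.
-/

open Finset

section EvenDistribution

variable {m q r : ℕ} {η : Fin m → ℕ}

lemma sum_eq_card_mul_add_card_filter_lt
    (hη : ∀ i : Fin m, η i = if (i : ℕ) < r then q + 1 else q) (I : Finset (Fin m)) :
    ∑ i ∈ I, η i = #I * q + #{i ∈ I | i.val < r} := by
  have hη' : ∀ i ∈ I, η i = q + if (i : ℕ) < r then 1 else 0 := fun i _ => by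
    rw [hη i]; split_ifs <;> rfl
  rw [sum_congr rfl hη', sum_add_distrib, sum_const, smul_eq_mul, card_filter]

lemma sum_le_card_mul_add_min
    (hη : ∀ i : Fin m, η i = if (i : ℕ) < r then q + 1 else q) (I : Finset (Fin m)) :
    ∑ i ∈ I, η i ≤ #I * q + min #I r := by
  rw [sum_eq_card_mul_add_card_filter_lt hη]
  gcongr
  refine le_min (card_filter_le _ _) ?_
  calc #{i ∈ I | i.val < r} ≤ #{i : Fin m | (i : ℕ) < r} :=
        card_le_card (filter_subset_filter _ (subset_univ I))
    _ = min m r := Fin.card_filter_val_lt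
    _ ≤ r := min_le_right _ _

lemma sum_filter_val_lt
    (hη : ∀ i : Fin m, η i = if (i : ℕ) < r then q + 1 else q) {t : ℕ} (ht : t ≤ m) :
    ∑ i ∈ {i : Fin m | (i : ℕ) < t}, η i = t * q + min t r := by
  rw [sum_eq_card_mul_add_card_filter_lt hη, filter_filter]
  simp only [← lt_min_iff]
  rw [Fin.card_filter_val_lt, Fin.card_filter_val_lt, min_eq_right ht,
    min_eq_right ((min_le_left t r).trans ht)]

theorem isGreatest_sum_of_card_eq
    (hη : ∀ i : Fin m, η i = if (i : ℕ) < r then q + 1 else q) {t : ℕ} (ht : t ≤ m) :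
    IsGreatest {v : ℕ | ∃ I : Finset (Fin m), #I = t ∧ ∑ i ∈ I, η i = v} (t * q + min t r) := by
  refine ⟨⟨_, ?_, sum_filter_val_lt hη ht⟩, ?_⟩
  · rw [Fin.card_filter_val_lt]; omega
  · rintro v ⟨I, rfl, rfl⟩
    exact sum_le_card_mul_add_min hη I

end EvenDistribution

section Threshold

variable {ι : Type*} [Fintype ι]

lemma exists_card_eq_and_forall_lt_or_forall_le {α : Type*} [LinearOrder α] (f : ι → α) (a : α)
    {t : ℕ} (ht : t ≤ Fintype.card ι) :
    ∃ I : Finset ι, #I = t ∧ ((∀ i ∈ I, a < f i) ∨ ∀ i ∉ I, f i ≤ a) := by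
  classical
  rcases le_or_gt t #{i | a < f i} with hle | hlt
  · obtain ⟨I, hI, hcard⟩ := exists_subset_card_eq hle
    exact ⟨I, hcard, Or.inl fun i hi => (mem_filter.mp (hI hi)).2⟩
  · obtain ⟨I, hI, -, hcard⟩ :=
      exists_subsuperset_card_eq (subset_univ _) hlt.le (by rwa [card_univ])
    exact ⟨I, hcard, Or.inr fun i hi => not_lt.mp fun h => hi (hI (by simpa using h))⟩

theorem exists_card_eq_mul_div_add_min_mod_le_sum (f : ι → ℕ) {t : ℕ}
    (ht : t ≤ Fintype.card ι) :
    ∃ I : Finset ι, #I = t ∧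
      t * ((∑ i, f i) / Fintype.card ι) + min t ((∑ i, f i) % Fintype.card ι) ≤ ∑ i ∈ I, f i := by
  classical
  set s := ∑ i, f i
  set q := s / Fintype.card ι
  obtain ⟨I, hcard, hI⟩ := exists_card_eq_and_forall_lt_or_forall_le f q ht
  refine ⟨I, hcard, ?_⟩
  rcases hI with hI | hIc
  · have hsum : #I • (q + 1) ≤ ∑ i ∈ I, f i := card_nsmul_le_sum _ _ _ hI
    rw [smul_eq_mul, hcard, mul_add_one] at hsum
    have := min_le_left t (s % Fintype.card ι)
    omega
  · have hcompl : ∑ i ∈ Iᶜ, f i ≤ #Iᶜ • q :=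
      sum_le_card_nsmul _ _ _ fun i hi => hIc i (mem_compl.mp hi)
    rw [smul_eq_mul, card_compl, hcard] at hcompl
    have hsplit : ∑ i ∈ I, f i + ∑ i ∈ Iᶜ, f i = s := sum_add_sum_compl I f
    have hdiv : Fintype.card ι * q + s % Fintype.card ι = s := Nat.div_add_mod _ _
    have hmul : (Fintype.card ι - t) * q + t * q = Fintype.card ι * q := by
      rw [← add_mul, Nat.sub_add_cancel ht]
    have := min_le_right t (s % Fintype.card ι)
    omega

end Threshold

theorem even_distribution_minimizes_max_general (m s t : ℕ)
    (htm : t ≤ m)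
    (η : Fin m → ℕ)
    (hη : ∀ i : Fin m, η i = if (i : ℕ) < s % m then s / m + 1 else s / m) :
    IsGreatest {v : ℕ | ∃ I : Finset (Fin m), I.card = t ∧ ∑ i ∈ I, η i = v}
      (t * (s / m) + min t (s % m)) ∧
    ∀ η' : Fin m → ℕ, ∑ i, η' i = s →
      ∃ I : Finset (Fin m), I.card = t ∧
        t * (s / m) + min t (s % m) ≤ ∑ i ∈ I, η' i := by
  refine ⟨isGreatest_sum_of_card_eq hη htm, fun η' hsum => ?_⟩
  obtain ⟨I, hcard, hle⟩ :=
    exists_card_eq_mul_div_add_min_mod_le_sum η' (t := t) (by rwa [Fintype.card_fin])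
  rw [hsum, Fintype.card_fin] at hle
  exact ⟨I, hcard, hle⟩

/-- Let `m ≥ 1` and let nonnegative integers `η₁,…,η_m` sum to `s`,
distributed as evenly as possible (the first `s % m` parts equal `⌈s/m⌉ = s/m + 1`
and the rest equal `⌊s/m⌋ = s/m`). Then for any `t` with `1 ≤ t ≤ m`, the maximum
of `Σ_{i∈I} η_i` over `I ⊆ [m]` with `|I| = t` equals
`t·⌊s/m⌋ + min{t, s − ⌊s/m⌋·m}`, and this is the minimum possible value of this
maximum over all nonnegative integer sequences summing to `s`. -/
theorem even_distribution_minimizes_max (m s t : ℕ)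
    (hm : 1 ≤ m) (ht1 : 1 ≤ t) (htm : t ≤ m)
    (η : Fin m → ℕ)
    (hη : ∀ i : Fin m, η i = if (i : ℕ) < s % m then s / m + 1 else s / m) :
    IsGreatest {v : ℕ | ∃ I : Finset (Fin m), I.card = t ∧ ∑ i ∈ I, η i = v}
      (t * (s / m) + min t (s % m)) ∧
    ∀ η' : Fin m → ℕ, ∑ i, η' i = s →
      ∃ I : Finset (Fin m), I.card = t ∧
        t * (s / m) + min t (s % m) ≤ ∑ i ∈ I, η' i :=
  even_distribution_minimizes_max_general m s t htm η hη
end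

section
/- The function s ↦ t·⌊s/m⌋ + min{t, s − ⌊s/m⌋·m} is nondecreasing in s (for fixed positive integers t ≤ m), and the function m ↦ t·⌊(n−rm)/m⌋ + min{t, (n−rm) − ⌊(n−rm)/m⌋·m} is nonincreasing in m (for fixed t, r, n with n − rm ≥ 0). -/
/-!
Write `s = q m + ρ` with `q = ⌊s/m⌋`; the bound is `t q + min(t, ρ)`. This is monotone in the pair
`(q, ρ)` ordered lexicographically, because `min(t, ρ) ≤ t` means a unit step in `q` outweighs any
loss in `ρ`. Increasing `s` or decreasing `m` (for `m ≥ 1`) can only increase `q`, and when `q`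
stays the same the remainder `s - q m` grows.
-/

def nullityBound (t m s : ℕ) : ℕ :=
  t * (s / m) + min t (s - s / m * m)

theorem mul_add_min_le_of_lex {t q q' ρ ρ' : ℕ} (hq : q ≤ q') (hρ : q = q' → ρ ≤ ρ') :
    t * q + min t ρ ≤ t * q' + min t ρ' := by
  rcases hq.eq_or_lt with rfl | hlt
  · gcongr
    exact hρ rfl
  · calc t * q + min t ρ ≤ t * (q + 1) := by rw [mul_add_one]; gcongr; exact min_le_left t ρ
      _ ≤ t * q' := by gcongr; exact hlt
      _ ≤ t * q' + min t ρ' := Nat.le_add_right _ _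

theorem nullityBound_mono (t m : ℕ) : Monotone (nullityBound t m) := by
  intro s s' hs
  refine mul_add_min_le_of_lex (Nat.div_le_div_right hs) fun hq => ?_
  rw [hq]
  omega

theorem nullityBound_le_of_le {m₁ m₂ : ℕ} (t s : ℕ) (hm₁ : 0 < m₁) (hm : m₁ ≤ m₂) :
    nullityBound t m₂ s ≤ nullityBound t m₁ s := by
  refine mul_add_min_le_of_lex (Nat.div_le_div_left hm hm₁) fun hq => ?_
  have : s / m₂ * m₁ ≤ s / m₂ * m₂ := Nat.mul_le_mul_left _ hm
  rw [← hq]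
  omega

theorem coatom_nullity_bound_monotone_general (t m : ℕ) :
    (∀ s s' : ℕ, s ≤ s' →
      t * (s / m) + min t (s - (s / m) * m) ≤
        t * (s' / m) + min t (s' - (s' / m) * m)) ∧
    (∀ n r m₁ m₂ : ℕ, 1 ≤ m₁ → m₁ ≤ m₂ → t ≤ m₁ → r * m₂ ≤ n →
      t * ((n - r * m₂) / m₂) + min t ((n - r * m₂) - ((n - r * m₂) / m₂) * m₂) ≤
        t * ((n - r * m₁) / m₁) + min t ((n - r * m₁) - ((n - r * m₁) / m₁) * m₁)) := by
  refine ⟨fun s s' hs => nullityBound_mono t m hs, fun n r m₁ m₂ hm₁ hm _ _ => ?_⟩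
  have hshift : n - r * m₂ ≤ n - r * m₁ := Nat.sub_le_sub_left (Nat.mul_le_mul_left r hm) n
  calc nullityBound t m₂ (n - r * m₂) ≤ nullityBound t m₁ (n - r * m₂) :=
        nullityBound_le_of_le t _ hm₁ hm
    _ ≤ nullityBound t m₁ (n - r * m₁) := nullityBound_mono t m₁ hshift

/-- The function `s ↦ t·⌊s/m⌋ + min{t, s − ⌊s/m⌋·m}` is
nondecreasing in `s` (for fixed positive integers `t ≤ m`), and the function
`m ↦ t·⌊(n−rm)/m⌋ + min{t, (n−rm) − ⌊(n−rm)/m⌋·m}` is nonincreasing in `m`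
(for fixed `t, r, n` with `n − rm ≥ 0`). -/
theorem coatom_nullity_bound_monotone (t m : ℕ) (ht : 1 ≤ t) (hm : 1 ≤ m)
    (htm : t ≤ m) :
    (∀ s s' : ℕ, s ≤ s' →
      t * (s / m) + min t (s - (s / m) * m) ≤
        t * (s' / m) + min t (s' - (s' / m) * m)) ∧
    (∀ n r m₁ m₂ : ℕ, 1 ≤ m₁ → m₁ ≤ m₂ → t ≤ m₁ → r * m₂ ≤ n →
      t * ((n - r * m₂) / m₂) + min t ((n - r * m₂) - ((n - r * m₂) / m₂) * m₂) ≤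
        t * ((n - r * m₁) / m₁) + min t ((n - r * m₁) - ((n - r * m₁) / m₁) * m₁)) :=
  coatom_nullity_bound_monotone_general t m
end

section
/- With notation as in the improved lower bound, d_new − d_old ≥ ⌊(r+δ−1−b)/m⌋ · (m − ⌈k/r⌉ + 1) ≥ 0, where d_old = n−k+1−⌈k/r⌉(δ−1)+(b−r) and d_new = n−k+1−(⌈k/r⌉−1)(⌊(r+δ−1−b)/m⌋+δ−1) − min{v, ⌈k/r⌉−1}. -/
/-! Divide `r + δ - 1 - b = q m + v` with remainder. Then
`d_new - d_old = q (m - ⌈k/r⌉ + 1) + (v - min v (⌈k/r⌉ - 1))`, whose second summand is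
nonnegative, and `m ≥ ⌈k/r⌉` because
`⌈k/r⌉ (r + δ - 1) ≤ n + a < n + b = ⌈n/(r+δ-1)⌉ (r + δ - 1)`. -/

lemma le_add_sub_one_div_mul (n : ℕ) {s : ℕ} (hs : 0 < s) : n ≤ (n + s - 1) / s * s := by
  have h := le_smul_ceilDiv (b := n) hs
  rwa [smul_eq_mul, Nat.ceilDiv_eq_add_pred_div, mul_comm] at h

lemma add_sub_one_div_mul_sub_lt (n : ℕ) {s : ℕ} (hs : 0 < s) :
    (n + s - 1) / s * s - n < s := by
  have := Nat.div_mul_le_self (n + s - 1) s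
  omega

lemma lt_of_mul_sub_lt_mul_sub {K N k n r d s : ℕ} (hs : s ≤ r + d) (hk : k ≤ K * r)
    (hkn : k + K * d ≤ n) (hn : n ≤ N * s) (hslack : K * r - k < N * s - n) : K < N := by
  refine Nat.lt_of_mul_lt_mul_right (a := s) ?_
  calc K * s ≤ K * (r + d) := Nat.mul_le_mul_left K hs
    _ = K * r + K * d := Nat.mul_add K r d
    _ < N * s := by omega

theorem improvement_over_old_bound_general (n k r δ ceilK ceilN a b m q v : ℕ)
    (hr0 : 0 < r) (hδ : 2 ≤ δ)
    (hceilK : ceilK = (k + r - 1) / r)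
    (hceilN : ceilN = (n + (r + δ - 1) - 1) / (r + δ - 1))
    (hkn : k + ceilK * (δ - 1) ≤ n)
    (ha : a = ceilK * r - k)
    (hb : b = ceilN * (r + δ - 1) - n)
    (hab : a < b)
    (hm : m = ceilN - 1)
    (hq : q = (r + δ - 1 - b) / m)
    (hv : v = (r + δ - 1 - b) - q * m)
    (dold dnew : ℤ)
    (hdold : dold = (n : ℤ) - (k : ℤ) + 1 - (ceilK : ℤ) * ((δ : ℤ) - 1) +
      ((b : ℤ) - (r : ℤ)))
    (hdnew : dnew = (n : ℤ) - (k : ℤ) + 1 -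
      ((ceilK : ℤ) - 1) * ((q : ℤ) + (δ : ℤ) - 1) - (min v (ceilK - 1) : ℕ)) :
    (q : ℤ) * ((m : ℤ) - (ceilK : ℤ) + 1) ≤ dnew - dold ∧
    0 ≤ (q : ℤ) * ((m : ℤ) - (ceilK : ℤ) + 1) := by
  have hs : 0 < r + δ - 1 := by omega
  have hb_lt : b < r + δ - 1 := hb ▸ hceilN ▸ add_sub_one_div_mul_sub_lt n hs
  have hceilK_le : ceilK ≤ m := by
    have := lt_of_mul_sub_lt_mul_sub (d := δ - 1) (by omega)
      (hceilK ▸ le_add_sub_one_div_mul k hr0) hkn (hceilN ▸ le_add_sub_one_div_mul n hs)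
      (ha ▸ hb ▸ hab)
    omega
  have hdivmod : (q : ℤ) * m + v = r + δ - 1 - b := by
    have hqm := hq ▸ Nat.div_mul_le_self (r + δ - 1 - b) m
    have h : q * m + v = r + δ - 1 - b := by omega
    zify [hb_lt.le, show 1 ≤ r + δ by omega] at h
    exact h
  have hgap : dnew - dold = q * (m - ceilK + 1) + (v - (min v (ceilK - 1) : ℕ)) := by
    rw [hdnew, hdold]
    linear_combination -hdivmod
  have hmin : ((min v (ceilK - 1) : ℕ) : ℤ) ≤ v := mod_cast min_le_left _ _
  have hceilK_le' : (ceilK : ℤ) ≤ m := mod_cast hceilK_le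
  exact ⟨by rw [hgap]; linarith, mul_nonneg (by positivity) (by linarith)⟩

/-- With notation of the improved lower bound,
`d_new − d_old ≥ ⌊(r+δ−1−b)/m⌋ · (m − ⌈k/r⌉ + 1) ≥ 0`, where
`d_old = n−k+1−⌈k/r⌉(δ−1)+(b−r)` and
`d_new = n−k+1−(⌈k/r⌉−1)(⌊(r+δ−1−b)/m⌋+δ−1) − min{v, ⌈k/r⌉−1}`. -/
theorem improvement_over_old_bound (n k r δ ceilK ceilN a b m q v : ℕ)
    (hr0 : 0 < r) (hrk : r < k) (hδ : 2 ≤ δ)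
    (hceilK : ceilK = (k + r - 1) / r)
    (hceilN : ceilN = (n + (r + δ - 1) - 1) / (r + δ - 1))
    (hkn : k + ceilK * (δ - 1) ≤ n)
    (ha : a = ceilK * r - k)
    (hb : b = ceilN * (r + δ - 1) - n)
    (hab : a < b)
    (hm : m = ceilN - 1)
    (hq : q = (r + δ - 1 - b) / m)
    (hv : v = (r + δ - 1 - b) - q * m)
    (dold dnew : ℤ)
    (hdold : dold = (n : ℤ) - (k : ℤ) + 1 - (ceilK : ℤ) * ((δ : ℤ) - 1) +
      ((b : ℤ) - (r : ℤ)))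
    (hdnew : dnew = (n : ℤ) - (k : ℤ) + 1 -
      ((ceilK : ℤ) - 1) * ((q : ℤ) + (δ : ℤ) - 1) - (min v (ceilK - 1) : ℕ)) :
    (q : ℤ) * ((m : ℤ) - (ceilK : ℤ) + 1) ≤ dnew - dold ∧
    0 ≤ (q : ℤ) * ((m : ℤ) - (ceilK : ℤ) + 1) :=
  improvement_over_old_bound_general n k r δ ceilK ceilN a b m q v hr0 hδ hceilK hceilN hkn ha hb
    hab hm hq hv dold dnew hdold hdnew
end
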